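/- Let 0 < α < 1/2 and let M ∈ SL(2,ℝ). Then for Lebesgue-almost every ξ ∈ ℝ² there exists a constant C > 0 such that b_{(M,ξ)}(T) < C·T^{−α} for all real T ≥ 1. -/

import Mathlib

open MeasureTheory Real Matrix Set
open scoped ENNReal

noncomputable section

instance : MeasurableSpace (Matrix (Fin 2) (Fin 2) ℝ) := borel _
instance : BorelSpace (Matrix (Fin 2) (Fin 2) ℝ) := ⟨rfl⟩

/-- The ambient space containing the group `G = SL(2,ℝ) ⋉ ℝ²` (pairs of a `2×2`
real matrix and a row vector). -/
abbrev GG : Type := Matrix (Fin 2) (Fin 2) ℝ × (Fin 2 → ℝ)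

/-- The multiplication law `(M,v)(M',v') = (MM', vM' + v')`. -/
def gmul (g h : GG) : GG := (g.1 * h.1, Matrix.vecMul g.2 h.1 + h.2)

/-- `G`, i.e. the set of pairs whose matrix part has determinant one. -/
def GSet : Set GG := {g | g.1.det = 1}

/-- `Γ = SL(2,ℤ) ⋉ ℤ²`. -/
def GammaSet : Set GG :=
  {g | g.1.det = 1 ∧ (∀ i j, ∃ n : ℤ, g.1 i j = (n : ℝ)) ∧ ∀ i, ∃ n : ℤ, g.2 i = (n : ℝ)}

/-- `U^x`. -/
def uElt (x : ℝ) : GG := (!![1, x; 0, 1], 0)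

/-- `a(y)`. -/
def aElt (y : ℝ) : GG := (!![Real.sqrt y, 0; 0, (Real.sqrt y)⁻¹], 0)

/-- `(1₂, ξ)`. -/
def transl (ξ : Fin 2 → ℝ) : GG := (1, ξ)

/-- The five one-parameter subgroups `e₁,…,e₅`. -/
def eFlow : Fin 5 → ℝ → GG :=
  ![fun t => (!![1, t; 0, 1], 0),
    fun t => (!![1, 0; t, 1], 0),
    fun t => (!![Real.exp t, 0; 0, Real.exp (-t)], 0),
    fun t => (1, ![t, 0]),
    fun t => (1, ![0, t])]

/-- Left invariant derivative in the direction `e_i`. -/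
def Dder (i : Fin 5) (F : GG → ℝ) : GG → ℝ :=
  fun g => deriv (fun t : ℝ => F (gmul g (eFlow i t))) 0

/-- Iterated left invariant derivative `D_w` associated to a word `w`. -/
def Dword : List (Fin 5) → (GG → ℝ) → GG → ℝ
  | [], F => F
  | i :: w, F => Dder i (Dword w F)

/-- `f ∈ C_b^k(Γ\G)` : `f` is `Γ`-left-invariant and all its left invariant
derivatives of order `≤ k` exist on `G`, are continuous and bounded there. -/
def InCb (k : ℕ) (f : GG → ℝ) : Prop :=
  (∀ γ ∈ GammaSet, ∀ g ∈ GSet, f (gmul γ g) = f g) ∧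
  (∀ w : List (Fin 5), w.length ≤ k →
      ContinuousOn (Dword w f) GSet ∧ ∃ B : ℝ, ∀ g ∈ GSet, |Dword w f g| ≤ B) ∧
  (∀ (i : Fin 5) (w : List (Fin 5)), (i :: w).length ≤ k → ∀ g ∈ GSet,
      DifferentiableAt ℝ (fun t : ℝ => Dword w f (gmul g (eFlow i t))) 0)

/-- The norm `‖f‖_{C_b^k} = ∑_w sup_{g ∈ G} |D_w f(g)|`, summed over all words of
length `≤ k`. -/
def CbNorm (k : ℕ) (f : GG → ℝ) : ℝ :=
  ∑ n ∈ Finset.range (k + 1), ∑ w : Fin n → Fin 5,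
    ⨆ g : GSet, |Dword (List.ofFn w) f (g : GG)|

/-- `ν` is a left Haar measure on `G` (viewed as a measure on the ambient space
which is concentrated on `GSet`): left invariant, finite on compacts and positive
on nonempty relatively open subsets of `G`. -/
def IsHaarOnG (ν : Measure GG) : Prop :=
  ν GSetᶜ = 0 ∧
  (∀ g ∈ GSet, MeasurePreserving (fun h => gmul g h) ν ν) ∧
  (∀ K : Set GG, IsCompact K → ν K < ⊤) ∧
  (∀ U : Set GG, IsOpen U → (U ∩ GSet).Nonempty → 0 < ν U)

/-- `F` is a `ν`-measurable fundamental domain for the left action of `Γ` on `G`. -/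
def IsFundDom (ν : Measure GG) (F : Set GG) : Prop :=
  MeasurableSet F ∧ F ⊆ GSet ∧
  ν (GSet \ ⋃ γ ∈ GammaSet, gmul γ '' F) = 0 ∧
  ∀ γ₁ ∈ GammaSet, ∀ γ₂ ∈ GammaSet, γ₁ ≠ γ₂ → ν (gmul γ₁ '' F ∩ gmul γ₂ '' F) = 0

/-- `∫_X f dμ = ν(F)⁻¹ ∫_F f dν`. -/
def XAvg (ν : Measure GG) (F : Set GG) (f : GG → ℝ) : ℝ :=
  (ν F).toReal⁻¹ * ∫ g in F, f g ∂ν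

/-- `⟨x⟩`, the distance from `x` to the nearest integer. -/
def nint (x : ℝ) : ℝ := |x - (round x : ℝ)|

/-- The majorant `b_{ξ,L}(y)`, computed in `[0,∞]` with the convention `a/0 = ∞`. -/
def bMajE (ξ : Fin 2 → ℝ) (L y : ℝ) : ℝ≥0∞ :=
  ⨆ q : ℕ+, min (min (ENNReal.ofReal (1 / (q : ℝ) ^ 2))
      (ENNReal.ofReal (Real.sqrt y) / ENNReal.ofReal (L * (q : ℝ) * nint ((q : ℝ) * ξ 0))))
    (ENNReal.ofReal (Real.sqrt y) / ENNReal.ofReal ((q : ℝ) * nint ((q : ℝ) * ξ 1)))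

/-- The majorant `b_{ξ,L}(y)` as a real number (it is always `≤ 1`). -/
def bMaj (ξ : Fin 2 → ℝ) (L y : ℝ) : ℝ := (bMajE ξ L y).toReal

/-- The Euclidean norm on `ℝ²`. -/
def eNorm2 (v : Fin 2 → ℝ) : ℝ := Real.sqrt (v 0 ^ 2 + v 1 ^ 2)

/-- `ℓ(M)`: the Euclidean length of the shortest nonzero vector of `ℤ²M`. -/
def ellM (M : Matrix (Fin 2) (Fin 2) ℝ) : ℝ :=
  ⨅ m : {m : Fin 2 → ℤ // m ≠ 0}, eNorm2 (Matrix.vecMul (fun i => (m.1 i : ℝ)) M)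

/-- `y_g(T) = T⁻¹ ℓ(g a(T))⁻²`. -/
def ygT (g : GG) (T : ℝ) : ℝ := T⁻¹ * (ellM ((gmul g (aElt T)).1) ^ 2)⁻¹

/-- The set of `δ > 0` such that for all `1 ≤ q ≤ δ^{-1/2}`, the set `(q⁻¹ℤ²)g`
is disjoint from `(1/(δq²)) 𝔯_T`. -/
def bgSet (g : GG) (T : ℝ) : Set ℝ :=
  {δ | 0 < δ ∧ ∀ q : ℕ+, ((q : ℕ) : ℝ) ≤ (Real.sqrt δ)⁻¹ → ∀ m : Fin 2 → ℤ,
    ¬ (|Matrix.vecMul (fun i => (m i : ℝ) / ((q : ℕ) : ℝ)) g.1 0 + g.2 0| ≤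
          1 / (δ * ((q : ℕ) : ℝ) ^ 2 * T) ∧
       |Matrix.vecMul (fun i => (m i : ℝ) / ((q : ℕ) : ℝ)) g.1 1 + g.2 1| ≤
          1 / (δ * ((q : ℕ) : ℝ) ^ 2))}

/-- `b_g(T)`, computed in `[0,∞]` (it is `∞` if no `δ > 0` qualifies). -/
def bgE (g : GG) (T : ℝ) : ℝ≥0∞ := sInf (ENNReal.ofReal '' bgSet g T)

/-- The Sobolev norm `‖φ‖_{W^{k,1}}`. -/
def W11Norm (k : ℕ) (φ : ℝ → ℝ) : ℝ :=
  ∑ j ∈ Finset.range (k + 1), ∫ x : ℝ, |iteratedDeriv j φ x|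

/-- `𝔐̃_ξ(X) = ∑_{k≥1} σ(k) min(1/k², 1/(Xk⟨kξ⟩))`, a term with `⟨kξ⟩ = 0` being
read as `σ(k)/k²`. -/
def Mtilde (ξ X : ℝ) : ℝ :=
  ∑' k : ℕ+, (((k : ℕ).divisors.card : ℝ) *
    (if nint (((k : ℕ) : ℝ) * ξ) = 0 then 1 / ((k : ℕ) : ℝ) ^ 2
     else min (1 / ((k : ℕ) : ℝ) ^ 2) (1 / (X * ((k : ℕ) : ℝ) * nint (((k : ℕ) : ℝ) * ξ)))))

/-- `e(x) = e^{2πix}`. -/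
def e2πi (x : ℝ) : ℂ := Complex.exp (2 * (Real.pi : ℂ) * Complex.I * (x : ℂ))

/-- The Fourier coefficient `f̂(M,m)` of a `Γ`-invariant function on `G`. -/
def fhat (f : GG → ℂ) (M : Matrix (Fin 2) (Fin 2) ℝ) (m : Fin 2 → ℤ) : ℂ :=
  ∫ ξ in Set.univ.pi fun _ : Fin 2 => Set.Icc (0:ℝ) 1,
    f (gmul (transl ξ) (M, 0)) * e2πi (-(∑ i, (m i : ℝ) * ξ i))

/-- `f̃_n(M) = f̂(M,(n,0))`. -/
def ftilde (f : GG → ℂ) (n : ℤ) (M : Matrix (Fin 2) (Fin 2) ℝ) : ℂ := fhat f M ![n, 0]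

end

noncomputable section

/-!
Substituting `ξ = ηM`, which preserves Lebesgue measure, turns `(q⁻¹ℤ²)(M, ξ)` into
`(q⁻¹ℤ² + η)M`. On the dyadic block `2ⁿ ≤ T < 2ⁿ⁺¹` it suffices that `δₙ = (2ⁿ⁺¹)^{-α}`
qualifies, and it fails only if `η` lies in the `q⁻¹ℤ²`-periodization of a parallelogram of
area `4/(δₙ² q⁴ 2ⁿ)` for some `q`. Each of the `(2Nq+1)²` grid cells meeting the ball of
radius `N` contains at most that area of the periodization, so the bad set in the ball has
measure `≪ N² Σ_q q⁻² · (4^α/2)ⁿ`, which is summable in `n` because `α < 1/2`. By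
Borel–Cantelli almost every `η` is bad for only finitely many `n`, and those blocks are
absorbed into `C` because `b_g(T) ≤ 1`.
-/

open Filter Metric

section Periodization

variable {ι : Type*}

def gridCell (q : ℕ) (k : ι → ℤ) : Set (ι → ℝ) :=
  univ.pi fun i => Ico ((k i : ℝ) / q) ((k i + 1) / q)

def periodize (q : ℕ) (R : Set (ι → ℝ)) : Set (ι → ℝ) :=
  ⋃ m : ι → ℤ, (fun η => (fun i => (m i : ℝ) / q) + η) ⁻¹' R

lemma mem_gridCell_iff {q : ℕ} (hq : 0 < q) {k : ι → ℤ} {η : ι → ℝ} :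
    η ∈ gridCell q k ↔ ∀ i, ⌊(q : ℝ) * η i⌋ = k i := by
  have hq' : (0 : ℝ) < q := by exact_mod_cast hq
  simp only [gridCell, Set.mem_pi, mem_univ, forall_const, mem_Ico]
  refine forall_congr' fun i => ?_
  rw [div_le_iff₀ hq', lt_div_iff₀ hq', Int.floor_eq_iff]
  constructor <;> rintro ⟨h₁, h₂⟩ <;> constructor <;> linarith

lemma measurableSet_gridCell [Countable ι] (q : ℕ) (k : ι → ℤ) : MeasurableSet (gridCell q k) :=
  MeasurableSet.univ_pi fun _ => measurableSet_Ico

lemma pairwise_disjoint_gridCell {q : ℕ} (hq : 0 < q) :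
    Pairwise (Function.onFun Disjoint (gridCell (ι := ι) q)) := by
  refine fun k k' hne => Set.disjoint_left.2 fun η hk hk' => hne ?_
  rw [mem_gridCell_iff hq] at hk hk'
  exact funext fun i => (hk i).symm.trans (hk' i)

lemma iUnion_gridCell {q : ℕ} (hq : 0 < q) : ⋃ k, gridCell (ι := ι) q k = univ :=
  eq_univ_of_forall fun η =>
    mem_iUnion.2 ⟨fun i => ⌊(q : ℝ) * η i⌋, (mem_gridCell_iff hq).2 fun _ => rfl⟩

lemma preimage_add_gridCell (q : ℕ) (m k : ι → ℤ) :
    (fun η => (fun i => (m i : ℝ) / q) + η) ⁻¹' gridCell q (m + k) = gridCell q k := by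
  ext η
  simp only [gridCell, mem_preimage, Set.mem_pi, mem_univ, forall_const, mem_Ico, Pi.add_apply,
    Int.cast_add, add_div, add_assoc, add_le_add_iff_left, add_lt_add_iff_left]

lemma tsum_measure_inter_gridCell [Finite ι] (μ : Measure (ι → ℝ)) {q : ℕ} (hq : 0 < q)
    (R : Set (ι → ℝ)) : ∑' k, μ (R ∩ gridCell q k) = μ R := by
  have h := measure_iUnion (μ := μ.restrict R) (pairwise_disjoint_gridCell hq)
    (measurableSet_gridCell q)
  simp only [iUnion_gridCell hq, Measure.restrict_apply_univ,
    Measure.restrict_apply (measurableSet_gridCell q _), inter_comm] at h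
  exact h.symm

lemma measure_periodize_inter_gridCell_le [Finite ι] (μ : Measure (ι → ℝ))
    [μ.IsAddLeftInvariant] {q : ℕ} (hq : 0 < q) (R : Set (ι → ℝ)) (k : ι → ℤ) :
    μ (periodize q R ∩ gridCell q k) ≤ μ R := by
  calc μ (periodize q R ∩ gridCell q k)
      ≤ ∑' m : ι → ℤ, μ ((fun η => (fun i => (m i : ℝ) / q) + η) ⁻¹' R ∩ gridCell q k) := by
        rw [periodize, iUnion_inter]; exact measure_iUnion_le _
    _ = ∑' m : ι → ℤ, μ (R ∩ gridCell q (m + k)) := by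
        congr! 2 with m
        rw [← preimage_add_gridCell q m k, ← preimage_inter, measure_preimage_add]
    _ = μ R := by
        rw [← tsum_measure_inter_gridCell μ hq R]
        exact (Equiv.addRight k).tsum_eq fun m => μ (R ∩ gridCell q m)

lemma closedBall_subset_biUnion_gridCell [Fintype ι] [DecidableEq ι] {q : ℕ} (hq : 0 < q)
    (N : ℕ) : closedBall (0 : ι → ℝ) N ⊆
      ⋃ k ∈ Fintype.piFinset fun _ => Finset.Icc (-(N * q : ℤ)) (N * q), gridCell q k := by
  intro η hη
  have hq' : (0 : ℝ) ≤ q := Nat.cast_nonneg q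
  refine mem_biUnion (x := fun i => ⌊(q : ℝ) * η i⌋) ?_ ((mem_gridCell_iff hq).2 fun _ => rfl)
  refine Fintype.mem_piFinset.2 fun i => Finset.mem_Icc.2 ?_
  have hi : |(q : ℝ) * η i| ≤ N * q := by
    rw [abs_mul, abs_of_nonneg hq', mul_comm]
    exact mul_le_mul_of_nonneg_right
      ((norm_le_pi_norm η i).trans (mem_closedBall_zero_iff.1 hη)) hq'
  rw [abs_le] at hi
  exact ⟨Int.le_floor.2 (by push_cast; linarith), Int.floor_le_iff.2 (by push_cast; linarith)⟩

lemma measure_closedBall_inter_periodize_le [Fintype ι] (μ : Measure (ι → ℝ))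
    [μ.IsAddLeftInvariant] {q : ℕ} (hq : 0 < q) (N : ℕ) (R : Set (ι → ℝ)) :
    μ (closedBall 0 N ∩ periodize q R) ≤ (2 * N * q + 1) ^ Fintype.card ι * μ R := by
  classical
  set K := Fintype.piFinset fun _ : ι => Finset.Icc (-(N * q : ℤ)) (N * q)
  calc μ (closedBall 0 N ∩ periodize q R)
      ≤ μ (⋃ k ∈ K, periodize q R ∩ gridCell q k) := by
        rw [← inter_iUnion₂, inter_comm]
        exact measure_mono (inter_subset_inter_right _ (closedBall_subset_biUnion_gridCell hq N))
    _ ≤ ∑ k ∈ K, μ (periodize q R ∩ gridCell q k) := measure_biUnion_finset_le _ _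
    _ ≤ ∑ _k ∈ K, μ R := Finset.sum_le_sum fun k _ => measure_periodize_inter_gridCell_le μ hq R k
    _ = (2 * N * q + 1) ^ Fintype.card ι * μ R := by
        have hcard : (N * q + 1 - -(N * q : ℤ)).toNat = 2 * N * q + 1 := by
          rw [show (N * q + 1 - -(N * q : ℤ)) = ((2 * N * q + 1 : ℕ) : ℤ) by push_cast; ring,
            Int.toNat_natCast]
        rw [Finset.sum_const, nsmul_eq_mul, Fintype.card_piFinset, Int.card_Icc, hcard,
          Finset.prod_const, Finset.card_univ]
        norm_cast

end Periodization

lemma measurePreserving_vecMul {ι : Type*} [Fintype ι] [DecidableEq ι] (A : Matrix ι ι ℝ)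
    (hA : |A.det| = 1) : MeasurePreserving (fun v : ι → ℝ => v ᵥ* A) volume volume := by
  have hf : (fun v : ι → ℝ => v ᵥ* A) = Matrix.toLin' Aᵀ := by
    funext v; simp [Matrix.toLin'_apply, Matrix.mulVec_transpose]
  have hdet : |LinearMap.det (Matrix.toLin' Aᵀ)| = 1 := by
    rwa [LinearMap.det_toLin', Matrix.det_transpose]
  rw [hf]
  refine ⟨(LinearMap.continuous_of_finiteDimensional _).measurable, ?_⟩
  rw [Real.map_linearMap_volume_pi_eq_smul_volume_pi (abs_pos.1 (hdet ▸ one_pos)), abs_inv, hdet]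
  simp

/-- The candidate value of `b_g(T)` on the dyadic block `2ⁿ ≤ T < 2ⁿ⁺¹`. -/
def dyadicDelta (α : ℝ) (n : ℕ) : ℝ := ((2 : ℝ) ^ (n + 1)) ^ (-α)

lemma dyadicDelta_pos (α : ℝ) (n : ℕ) : 0 < dyadicDelta α n :=
  Real.rpow_pos_of_pos (by positivity) _

lemma inv_dyadicDelta_sq_mul_two_pow (α : ℝ) (n : ℕ) :
    (dyadicDelta α n ^ 2 * 2 ^ n)⁻¹ = (4 : ℝ) ^ α * ((4 : ℝ) ^ α / 2) ^ n := by
  have h4 : (4 : ℝ) ^ α = ((2 : ℝ) ^ α) ^ 2 := by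
    rw [Real.rpow_pow_comm zero_le_two]; norm_num
  rw [dyadicDelta, Real.rpow_neg (by positivity), ← Real.rpow_pow_comm zero_le_two, h4]
  rw [div_pow, ← pow_mul, inv_pow, ← pow_mul]
  field_simp
  ring

/-- `{η | ηM ∈ (1/(δₙq²)) 𝔯_{2ⁿ}}`; its `periodize q` is the set of `η` for which
`(q⁻¹ℤ² + η)M` meets that rectangle. -/
def approxRegion (α : ℝ) (M : Matrix (Fin 2) (Fin 2) ℝ) (n q : ℕ) : Set (Fin 2 → ℝ) :=
  (fun v => v ᵥ* M) ⁻¹'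
    Icc (-![1 / (dyadicDelta α n * q ^ 2 * 2 ^ n), 1 / (dyadicDelta α n * q ^ 2)])
      ![1 / (dyadicDelta α n * q ^ 2 * 2 ^ n), 1 / (dyadicDelta α n * q ^ 2)]

def badSet (α : ℝ) (M : Matrix (Fin 2) (Fin 2) ℝ) (n : ℕ) : Set (Fin 2 → ℝ) :=
  ⋃ q : ℕ+, periodize q (approxRegion α M n q)

lemma mem_approxRegion_iff {α : ℝ} {M : Matrix (Fin 2) (Fin 2) ℝ} {n q : ℕ} {v : Fin 2 → ℝ} :
    v ∈ approxRegion α M n q ↔ |(v ᵥ* M) 0| ≤ 1 / (dyadicDelta α n * q ^ 2 * 2 ^ n) ∧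
      |(v ᵥ* M) 1| ≤ 1 / (dyadicDelta α n * q ^ 2) := by
  simp only [approxRegion, mem_preimage, mem_Icc, Pi.le_def, Fin.forall_fin_two, Pi.neg_apply,
    Matrix.cons_val_zero, Matrix.cons_val_one, abs_le]
  tauto

lemma volume_approxRegion (α : ℝ) {M : Matrix (Fin 2) (Fin 2) ℝ} (hM : |M.det| = 1) (n q : ℕ) :
    volume (approxRegion α M n q) = ENNReal.ofReal (2 * (1 / (dyadicDelta α n * q ^ 2 * 2 ^ n)))
      * ENNReal.ofReal (2 * (1 / (dyadicDelta α n * q ^ 2))) := by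
  rw [approxRegion,
    (measurePreserving_vecMul M hM).measure_preimage measurableSet_Icc.nullMeasurableSet,
    Real.volume_Icc_pi, Fin.prod_univ_two]
  simp only [Pi.neg_apply, Matrix.cons_val_zero, Matrix.cons_val_one, sub_neg_eq_add, two_mul]

lemma cellCount_mul_volume_approxRegion_le (α : ℝ) {M : Matrix (Fin 2) (Fin 2) ℝ}
    (hM : |M.det| = 1) (N n : ℕ) {q : ℕ} (hq : 0 < q) :
    (2 * N * q + 1 : ℝ≥0∞) ^ 2 * volume (approxRegion α M n q) ≤
      ENNReal.ofReal (4 * (2 * N + 1) ^ 2 * (dyadicDelta α n ^ 2 * 2 ^ n)⁻¹) *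
        ENNReal.ofReal (1 / (q : ℝ) ^ 2) := by
  have hδ := dyadicDelta_pos α n
  have hq1 : (1 : ℝ) ≤ q := by exact_mod_cast hq
  have hcount : 2 * (N : ℝ) * q + 1 ≤ (2 * N + 1) * q := by nlinarith
  have hcast : (2 * N * q + 1 : ℝ≥0∞) ^ 2 = ENNReal.ofReal ((2 * N * q + 1) ^ 2) := by
    exact_mod_cast (ENNReal.ofReal_natCast ((2 * N * q + 1) ^ 2)).symm
  rw [volume_approxRegion α hM, hcast, ← ENNReal.ofReal_mul (by positivity),
    ← ENNReal.ofReal_mul (by positivity), ← ENNReal.ofReal_mul (by positivity)]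
  refine ENNReal.ofReal_le_ofReal ?_
  set δ := dyadicDelta α n
  set x : ℝ := (q : ℝ)
  calc (2 * N * x + 1) ^ 2 * (2 * (1 / (δ * x ^ 2 * 2 ^ n)) * (2 * (1 / (δ * x ^ 2))))
      = (2 * N * x + 1) ^ 2 * (4 * (δ ^ 2 * 2 ^ n)⁻¹ / x ^ 4) := by
        field_simp; ring
    _ ≤ ((2 * N + 1) * x) ^ 2 * (4 * (δ ^ 2 * 2 ^ n)⁻¹ / x ^ 4) := by gcongr
    _ = 4 * (2 * N + 1) ^ 2 * (δ ^ 2 * 2 ^ n)⁻¹ * (1 / x ^ 2) := by field_simp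

lemma volume_closedBall_inter_badSet_le (α : ℝ) {M : Matrix (Fin 2) (Fin 2) ℝ}
    (hM : |M.det| = 1) (N n : ℕ) :
    volume (closedBall 0 N ∩ badSet α M n) ≤
      ENNReal.ofReal (4 * (2 * N + 1) ^ 2 * (dyadicDelta α n ^ 2 * 2 ^ n)⁻¹) *
        ∑' q : ℕ+, ENNReal.ofReal (1 / (q : ℝ) ^ 2) := by
  rw [← ENNReal.tsum_mul_left]
  calc volume (closedBall 0 N ∩ badSet α M n)
      ≤ ∑' q : ℕ+, volume (closedBall 0 N ∩ periodize q (approxRegion α M n q)) := by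
        rw [badSet, inter_iUnion]; exact measure_iUnion_le _
    _ ≤ ∑' q : ℕ+, (2 * N * q + 1) ^ 2 * volume (approxRegion α M n q) :=
        ENNReal.tsum_le_tsum fun q => by
          simpa using
            measure_closedBall_inter_periodize_le volume q.pos N (approxRegion α M n q)
    _ ≤ _ := ENNReal.tsum_le_tsum fun q =>
        cellCount_mul_volume_approxRegion_le α hM N n q.pos

lemma tsum_volume_closedBall_inter_badSet_ne_top {α : ℝ} (hα : α < 1 / 2)
    {M : Matrix (Fin 2) (Fin 2) ℝ} (hM : |M.det| = 1) (N : ℕ) :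
    ∑' n, volume (closedBall 0 N ∩ badSet α M n) ≠ ∞ := by
  have hr : (4 : ℝ) ^ α / 2 < 1 := by
    rw [div_lt_one two_pos]
    calc (4 : ℝ) ^ α < 4 ^ (1 / 2 : ℝ) := Real.rpow_lt_rpow_of_exponent_lt (by norm_num) hα
      _ = 2 := by
        rw [← Real.sqrt_eq_rpow, show (4 : ℝ) = 2 ^ 2 by norm_num, Real.sqrt_sq zero_le_two]
  have hS : ∑' q : ℕ+, ENNReal.ofReal (1 / (q : ℝ) ^ 2) ≠ ∞ := by
    have hsum : Summable fun q : ℕ+ => 1 / ((q : ℕ) : ℝ) ^ 2 :=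
      (Real.summable_one_div_nat_pow.2 one_lt_two).comp_injective PNat.coe_injective
    rw [← ENNReal.ofReal_tsum_of_nonneg (fun _ => by positivity) hsum]
    exact ENNReal.ofReal_ne_top
  refine ne_top_of_le_ne_top ?_
    (ENNReal.tsum_le_tsum fun n => volume_closedBall_inter_badSet_le α hM N n)
  simp_rw [inv_dyadicDelta_sq_mul_two_pow, ← mul_assoc,
    ENNReal.ofReal_mul (by positivity : (0 : ℝ) ≤ 4 * (2 * N + 1) ^ 2 * 4 ^ α),
    ENNReal.ofReal_pow (by positivity : (0 : ℝ) ≤ 4 ^ α / 2)]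
  rw [ENNReal.tsum_mul_right, ENNReal.tsum_mul_left, ENNReal.tsum_geometric]
  refine ENNReal.mul_ne_top (ENNReal.mul_ne_top ENNReal.ofReal_ne_top ?_) hS
  exact ENNReal.inv_ne_top.2 (tsub_pos_of_lt (ENNReal.ofReal_lt_one.2 hr)).ne'

lemma ae_eventually_notMem_badSet {α : ℝ} (hα : α < 1 / 2) {M : Matrix (Fin 2) (Fin 2) ℝ}
    (hM : |M.det| = 1) : ∀ᵐ η : Fin 2 → ℝ, ∀ᶠ n in atTop, η ∉ badSet α M n := by
  have h : ∀ N : ℕ, ∀ᵐ η : Fin 2 → ℝ, ∀ᶠ n in atTop, η ∉ closedBall 0 N ∩ badSet α M n :=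
    fun N => ae_eventually_notMem (tsum_volume_closedBall_inter_badSet_ne_top hα hM N)
  filter_upwards [ae_all_iff.2 h] with η hη
  obtain ⟨N, hN⟩ := exists_nat_ge ‖η‖
  filter_upwards [hη N] with n hn hbad
  exact hn ⟨mem_closedBall_zero_iff.2 hN, hbad⟩

lemma bgE_le_of_mem {g : GG} {T δ : ℝ} (h : δ ∈ bgSet g T) : bgE g T ≤ ENNReal.ofReal δ :=
  sInf_le (mem_image_of_mem _ h)

lemma bgE_le_one (g : GG) (T : ℝ) : bgE g T ≤ 1 := by
  -- every `δ > 1` qualifies vacuously, since no `q ≥ 1` satisfies `q ≤ δ^{-1/2}`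
  refine ENNReal.le_of_forall_pos_le_add fun ε hε _ => ?_
  have hδ : 1 < 1 + (ε : ℝ) := lt_add_of_pos_right 1 hε
  refine (bgE_le_of_mem ⟨by positivity, fun q hq m _ => ?_⟩).trans_eq ?_
  · have hq1 : (1 : ℝ) ≤ (q : ℕ) := by exact_mod_cast q.pos
    have hsqrt : (Real.sqrt (1 + ε))⁻¹ < 1 :=
      inv_lt_one_of_one_lt₀ ((Real.lt_sqrt zero_le_one).2 (by simpa using hδ))
    linarith
  · rw [ENNReal.ofReal_add zero_le_one ε.coe_nonneg]; simp

lemma dyadicDelta_mem_bgSet {α : ℝ} {M : Matrix (Fin 2) (Fin 2) ℝ} {η : Fin 2 → ℝ} {n : ℕ}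
    {T : ℝ} (hη : η ∉ badSet α M n) (hT : 2 ^ n ≤ T) :
    dyadicDelta α n ∈ bgSet (M, η ᵥ* M) T := by
  refine ⟨dyadicDelta_pos α n, fun q _ m hm => hη ?_⟩
  refine mem_iUnion.2 ⟨q, mem_iUnion.2 ⟨m, mem_approxRegion_iff.2 ?_⟩⟩
  have hδ := dyadicDelta_pos α n
  rw [Matrix.add_vecMul]
  refine ⟨hm.1.trans ?_, hm.2⟩
  gcongr

lemma exists_bgE_lt_of_eventually_notMem_badSet {α : ℝ} (hα : 0 < α)
    {M : Matrix (Fin 2) (Fin 2) ℝ} {η : Fin 2 → ℝ} (hη : ∀ᶠ n in atTop, η ∉ badSet α M n) :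
    ∃ C : ℝ, 0 < C ∧ ∀ T : ℝ, 1 ≤ T → bgE (M, η ᵥ* M) T < ENNReal.ofReal (C * T ^ (-α)) := by
  obtain ⟨n₀, hn₀⟩ := eventually_atTop.1 hη
  have hC : 1 ≤ ((2 : ℝ) ^ n₀) ^ α := Real.one_le_rpow (one_le_pow₀ one_le_two) hα.le
  refine ⟨((2 : ℝ) ^ n₀) ^ α, by positivity, fun T hT => ?_⟩
  obtain ⟨n, hnT, hTn⟩ := exists_nat_pow_near hT one_lt_two
  have hT0 : 0 < T := by linarith
  rcases le_or_gt n₀ n with hn | hn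
  · calc bgE (M, η ᵥ* M) T ≤ ENNReal.ofReal (dyadicDelta α n) :=
          bgE_le_of_mem (dyadicDelta_mem_bgSet (hn₀ n hn) hnT)
      _ < _ := by
        rw [ENNReal.ofReal_lt_ofReal_iff (by positivity)]
        calc dyadicDelta α n < T ^ (-α) := Real.rpow_lt_rpow_of_neg hT0 hTn (neg_lt_zero.2 hα)
          _ ≤ _ := le_mul_of_one_le_left (by positivity) hC
  · calc bgE (M, η ᵥ* M) T ≤ 1 := bgE_le_one _ _
      _ < _ := by
        rw [← ENNReal.ofReal_one, ENNReal.ofReal_lt_ofReal_iff (by positivity),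
          Real.rpow_neg hT0.le, ← div_eq_mul_inv, one_lt_div (by positivity)]
        exact Real.rpow_lt_rpow hT0.le (hTn.trans_le (pow_le_pow_right₀ one_le_two hn)) hα

/-- **Proposition 9.6 (generic decay of `b_g(T)`).** Let `0 < α < 1/2` and
`M ∈ SL(2,ℝ)`. Then for Lebesgue-almost every `ξ ∈ ℝ²` there is `C > 0` with
`b_{(M,ξ)}(T) < C T^{-α}` for all `T ≥ 1`. -/
theorem bg_generic_decay (α : ℝ) (hα0 : 0 < α) (hα1 : α < 1 / 2)
    (M : Matrix (Fin 2) (Fin 2) ℝ) (hM : M.det = 1) :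
    ∀ᵐ ξ : Fin 2 → ℝ ∂(volume : Measure (Fin 2 → ℝ)),
      ∃ C : ℝ, 0 < C ∧ ∀ T : ℝ, 1 ≤ T →
        bgE (M, ξ) T < ENNReal.ofReal (C * T ^ (-α)) := by
  have hunit : IsUnit M.det := by simp [hM]
  have hMinv : |M⁻¹.det| = 1 := by simp [Matrix.det_nonsing_inv, hM]
  have hgood := (ae_eventually_notMem_badSet hα1 (by simp [hM])).mono fun η hη =>
    exists_bgE_lt_of_eventually_notMem_badSet hα0 (M := M) hη
  filter_upwards [(measurePreserving_vecMul M⁻¹ hMinv).quasiMeasurePreserving.ae hgood]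
    with ξ hξ
  rwa [Matrix.vecMul_vecMul, Matrix.nonsing_inv_mul M hunit, Matrix.vecMul_one] at hξ

end
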